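/- arXiv:1706.05644 — 2 statements merged into one kernel-verified Lean document; each statement's English description precedes it below -/
import Mathlib

section
/- Suppose q is a real-valued function on {α−1+s : s = 0,1,…,b+1} and f : ℝ → ℝ. If y : T_b → ℝ satisfies y(t) = Σ_{s=0}^{b+1} G(t,s)·q(s+α−1)·f(y(s+α−1)) for every t ∈ T_b, then y satisfies the discrete fractional boundary value problem Δ^{α}y(t) + q(t+α−1)·f(y(t+α−1)) = 0 for t = 0,1,…,b+1 together with y(α−2) = 0 and y(α+b+1) = 0. -/
/-!
Write `G(t,s) = (c_s t^[α-1] - (t-s-1)^[α-1]) / Γ(α)` with `c_s = (α+b-s)^[α-1] / (α+b+1)^[α-1]`;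
the second falling power vanishes when `s > t-α+1`, so the case split in `G` disappears.
The heart of the matter is the power rule `Δ^{-(2-α)} (t-n)^[α-1] = Γ(α) (t-n)₊`, which after
writing falling powers through `Γ` is the Chu–Vandermonde identity for rising factorials with
`α + (2-α) = 2`. Consequently `Δ^α` annihilates `t^[α-1]` and sends `(t-s-1)^[α-1]` to
`Γ(α)` times the Kronecker delta at `t = s`. The boundary values hold because every term
vanishes at `t = α-2`, and at `t = α+b+1` the coefficient `c_s` makes the two terms cancel.
-/

/-- Falling power `x^[y] = Γ(x+1)/Γ(x-y+1)`; it equals 0 when `x-y+1` is a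
nonpositive integer since `Real.Gamma` vanishes there (and division by zero is zero). -/
noncomputable def fp (x y : ℝ) : ℝ := Real.Gamma (x + 1) / Real.Gamma (x - y + 1)

/-- The Green function `G(t,s)` of the discrete fractional boundary value problem,
for `t ∈ T_b` (a real number) and an integer `s ∈ {0,1,…,b+1}`. -/
noncomputable def G (α : ℝ) (b : ℕ) (t : ℝ) (s : ℕ) : ℝ :=
  if (s : ℝ) ≤ t - α + 1 then
    1 / Real.Gamma α *
      (fp t (α - 1) * fp (α + b - s) (α - 1) / fp (α + b + 1) (α - 1) - fp (t - s - 1) (α - 1))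
  else
    1 / Real.Gamma α * (fp t (α - 1) * fp (α + b - s) (α - 1) / fp (α + b + 1) (α - 1))

/-- A function `y : T_b → ℝ`, `T_b = {α-2+k : k = 0,…,b+3}`, is encoded as `y : ℕ → ℝ`
via `k ↦ y(α-2+k)`.  `fracSum α y k` is the discrete fractional sum
`(Δ^{-(2-α)} y)(t)` of order `2-α ∈ [0,1)` starting at `a = α-2`, evaluated at the
point `t = a + (2-α) + k = k`; when `α = 2` we use the convention `Δ^0 y = y`. -/
noncomputable def fracSum (α : ℝ) (y : ℕ → ℝ) (k : ℕ) : ℝ :=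
  if α = 2 then y k
  else 1 / Real.Gamma (2 - α) *
    ∑ j ∈ Finset.range (k + 1), fp ((k : ℝ) - (j : ℝ) + 1 - α) (1 - α) * y j

/-- The discrete fractional difference `(Δ^α y)(t) = Δ²(Δ^{-(2-α)} y)(t)` at `t ∈ ℕ`,
where `Δ` is the forward difference. -/
noncomputable def fracDiff (α : ℝ) (y : ℕ → ℝ) (t : ℕ) : ℝ :=
  fracSum α y (t + 2) - 2 * fracSum α y (t + 1) + fracSum α y t

open Finset Polynomial
open scoped Nat

/-- Chu–Vandermonde for rising factorials, reduced to the falling-factorial version via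
`(x)ₖ = (-1)ᵏ (-x)⁽ᵏ⁾`. -/
theorem ascPochhammer_eval_add {R : Type*} [CommRing R] (x y : R) (n : ℕ) :
    (ascPochhammer R n).eval (x + y) = ∑ ij ∈ antidiagonal n,
      n.choose ij.1 * ((ascPochhammer R ij.1).eval x * (ascPochhammer R ij.2).eval y) := by
  have hsq (k : ℕ) : ((-1 : R) ^ k) * (-1) ^ k = 1 := by rw [← mul_pow]; simp
  have hdesc (r : R) (k : ℕ) :
      (descPochhammer ℤ k).smeval (-r) = (-1) ^ k * (ascPochhammer R k).eval r := by
    rw [descPochhammer_smeval_eq_ascPochhammer, ascPochhammer_smeval_eq_eval, ← neg_neg r,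
      ascPochhammer_eval_neg_eq_descPochhammer, descPochhammer_eval_eq_ascPochhammer, neg_neg,
      ← mul_assoc, hsq, one_mul]
  have h := Ring.descPochhammer_smeval_add (r := -x) (s := -y) n (Commute.all _ _)
  simp only [← neg_add, hdesc] at h
  rw [← one_mul (eval _ _), ← hsq n, mul_assoc, h, mul_sum]
  refine sum_congr rfl fun ij hij => ?_
  rw [← mem_antidiagonal.mp hij, pow_add]
  set c := (((ij.1 + ij.2).choose ij.1 : ℕ) : R) *
    (eval x (ascPochhammer R ij.1) * eval y (ascPochhammer R ij.2))
  linear_combination c * ((-1) ^ ij.2 * (-1) ^ ij.2) * hsq ij.1 + c * hsq ij.2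

theorem sum_ascPochhammer_div_factorial {K : Type*} [Field K] [CharZero K] (x y : K) (n : ℕ) :
    ∑ i ∈ range (n + 1), (ascPochhammer K i).eval x / i ! *
        ((ascPochhammer K (n - i)).eval y / (n - i)!) =
      (ascPochhammer K n).eval (x + y) / n ! := by
  rw [ascPochhammer_eval_add, Nat.sum_antidiagonal_eq_sum_range_succ
    (fun i j => (n.choose i : K) * ((ascPochhammer K i).eval x * (ascPochhammer K j).eval y)),
    sum_div]
  refine sum_congr rfl fun i hi => ?_
  have hn : (n ! : K) ≠ 0 := Nat.cast_ne_zero.mpr n.factorial_ne_zero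
  rw [Nat.cast_choose K (Nat.lt_succ_iff.mp (mem_range.mp hi))]
  field_simp

theorem Real.Gamma_add_nat_eq_ascPochhammer {x : ℝ} (hx : 0 < x) (n : ℕ) :
    Real.Gamma (x + n) = (ascPochhammer ℝ n).eval x * Real.Gamma x := by
  induction n with
  | zero => simp
  | succ n ih =>
    rw [Nat.cast_succ, ← add_assoc, Real.Gamma_add_one (by positivity), ih,
      ascPochhammer_succ_eval]
    ring

theorem fp_eq_zero_of_eq_neg_nat {x y : ℝ} (m : ℕ) (h : x - y + 1 = -m) : fp x y = 0 := by
  rw [fp, h, Real.Gamma_neg_nat_eq_zero, div_zero]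

theorem fp_pos {x y : ℝ} (hx : 0 < x + 1) (hxy : 0 < x - y + 1) : 0 < fp x y :=
  div_pos (Real.Gamma_pos_of_pos hx) (Real.Gamma_pos_of_pos hxy)

theorem fp_natCast_one (n : ℕ) : fp n 1 = n := by
  rcases n with _ | n
  · simp [fp]
  · rw [fp, sub_add_cancel, Real.Gamma_add_one (by positivity)]
    field_simp [(Real.Gamma_pos_of_pos (by positivity : (0 : ℝ) < (n + 1 : ℕ))).ne']

theorem fp_natCast_add_sub_one {x : ℝ} (hx : 0 < x) (m : ℕ) :
    fp (m + x - 1) (x - 1) = Real.Gamma x * ((ascPochhammer ℝ m).eval x / m !) := by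
  rw [fp, show (m : ℝ) + x - 1 + 1 = x + m by ring,
    show (m : ℝ) + x - 1 - (x - 1) + 1 = m + 1 by ring, Real.Gamma_add_nat_eq_ascPochhammer hx,
    Real.Gamma_nat_eq_factorial]
  ring

/-- The falling power `(t - n)^[α-1]` at the point `t = α - 2 + j` of `T_b`. -/
noncomputable def shiftedPow (α : ℝ) (n j : ℕ) : ℝ := fp (α - 2 + j - n) (α - 1)

theorem shiftedPow_eq_zero_of_le (α : ℝ) {n j : ℕ} (h : j ≤ n) : shiftedPow α n j = 0 :=
  fp_eq_zero_of_eq_neg_nat (n - j) (by push_cast [Nat.cast_sub h]; ring)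

theorem shiftedPow_add (α : ℝ) (n i : ℕ) : shiftedPow α n (n + i) = shiftedPow α 0 i := by
  simp only [shiftedPow]
  push_cast
  ring_nf

section

variable {α : ℝ}

theorem fracSum_congr {u v : ℕ → ℝ} {k : ℕ} (h : ∀ j ≤ k, u j = v j) :
    fracSum α u k = fracSum α v k := by
  unfold fracSum
  split_ifs
  · exact h k le_rfl
  · exact congrArg _ (sum_congr rfl fun j hj => by rw [h j (Nat.lt_succ_iff.mp (mem_range.mp hj))])

theorem fracSum_eq_zero {u : ℕ → ℝ} {k : ℕ} (h : ∀ j ≤ k, u j = 0) : fracSum α u k = 0 := by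
  unfold fracSum
  split_ifs
  · exact h k le_rfl
  · rw [sum_eq_zero fun j hj => by rw [h j (Nat.lt_succ_iff.mp (mem_range.mp hj)), mul_zero],
      mul_zero]

theorem fracSum_sub (u v : ℕ → ℝ) (k : ℕ) :
    fracSum α (fun j => u j - v j) k = fracSum α u k - fracSum α v k := by
  unfold fracSum
  split_ifs
  · rfl
  · simp only [mul_sub, sum_sub_distrib]

theorem fracSum_const_mul (c : ℝ) (u : ℕ → ℝ) (k : ℕ) :
    fracSum α (fun j => c * u j) k = c * fracSum α u k := by
  unfold fracSum
  split_ifs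
  · rfl
  · simp only [mul_sum]
    exact sum_congr rfl fun j _ => by ring

theorem fracSum_sum {ι : Type*} (F : Finset ι) (g : ι → ℕ → ℝ) (k : ℕ) :
    fracSum α (fun j => ∑ s ∈ F, g s j) k = ∑ s ∈ F, fracSum α (g s) k := by
  unfold fracSum
  split_ifs
  · rfl
  · simp only [mul_sum]
    exact sum_comm

theorem fracDiff_congr {u v : ℕ → ℝ} {t : ℕ} (h : ∀ j ≤ t + 2, u j = v j) :
    fracDiff α u t = fracDiff α v t := by
  simp only [fracDiff]
  rw [fracSum_congr h, fracSum_congr fun j hj => h j (by omega),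
    fracSum_congr fun j hj => h j (by omega)]

theorem fracDiff_sub (u v : ℕ → ℝ) (t : ℕ) :
    fracDiff α (fun j => u j - v j) t = fracDiff α u t - fracDiff α v t := by
  simp only [fracDiff, fracSum_sub]
  ring

theorem fracDiff_const_mul (c : ℝ) (u : ℕ → ℝ) (t : ℕ) :
    fracDiff α (fun j => c * u j) t = c * fracDiff α u t := by
  simp only [fracDiff, fracSum_const_mul]
  ring

theorem fracDiff_sum {ι : Type*} (F : Finset ι) (g : ι → ℕ → ℝ) (t : ℕ) :
    fracDiff α (fun j => ∑ s ∈ F, g s j) t = ∑ s ∈ F, fracDiff α (g s) t := by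
  simp only [fracDiff, fracSum_sum, sum_add_distrib, sum_sub_distrib, mul_sum]

end

theorem fracSum_add_of_eq_zero {α : ℝ} {u : ℕ → ℝ} {n : ℕ} (h : ∀ j < n, u j = 0) (m : ℕ) :
    fracSum α u (n + m) = fracSum α (fun i => u (n + i)) m := by
  unfold fracSum
  split_ifs
  · rfl
  · rw [add_assoc, sum_range_add, sum_eq_zero fun j hj => by rw [h j (mem_range.mp hj), mul_zero],
      zero_add]
    push_cast
    ring_nf

theorem fracSum_shiftedPow_zero {α : ℝ} (hα1 : 1 < α) (hα2 : α ≤ 2) (k : ℕ) :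
    fracSum α (shiftedPow α 0) k = Real.Gamma α * k := by
  rcases hα2.eq_or_lt with rfl | hα2
  · norm_num [fracSum, shiftedPow, fp_natCast_one]
  rcases k with _ | m
  · simpa using fracSum_eq_zero fun j hj => shiftedPow_eq_zero_of_le α hj
  have hν : 0 < 2 - α := by linarith
  have hterm (i : ℕ) (hi : i ∈ range (m + 1)) :
      fp ((m + 1 : ℕ) - (i + 1 : ℕ) + 1 - α) (1 - α) * shiftedPow α 0 (i + 1) =
        Real.Gamma (2 - α) * Real.Gamma α *
          ((ascPochhammer ℝ i).eval α / i ! *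
            ((ascPochhammer ℝ (m - i)).eval (2 - α) / (m - i)!)) := by
    have him : i ≤ m := Nat.lt_succ_iff.mp (mem_range.mp hi)
    rw [shiftedPow, show ((m + 1 : ℕ) : ℝ) - (i + 1 : ℕ) + 1 - α = (m - i : ℕ) + (2 - α) - 1 by
        push_cast [Nat.cast_sub him]; ring,
      show 1 - α = (2 - α) - 1 by ring, show α - 2 + (i + 1 : ℕ) - (0 : ℕ) = i + α - 1 by
        push_cast; ring,
      fp_natCast_add_sub_one hν, fp_natCast_add_sub_one (by linarith)]
    ring
  have htwo : (ascPochhammer ℝ m).eval 2 / m ! = m + 1 := by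
    have h := factorial_mul_ascPochhammer ℝ 1 m
    norm_num at h
    rw [h, add_comm, Nat.factorial_succ]
    push_cast
    field_simp
  rw [fracSum, if_neg hα2.ne, sum_range_succ', shiftedPow_eq_zero_of_le α le_rfl, mul_zero,
    add_zero, sum_congr rfl hterm, ← mul_sum, sum_ascPochhammer_div_factorial, add_sub_cancel,
    htwo]
  field_simp [(Real.Gamma_pos_of_pos hν).ne']
  push_cast
  ring

/-- The power rule `Δ^{-(2-α)} (t - n)^[α-1] = Γ(α) (t - n)₊`. -/
theorem fracSum_shiftedPow {α : ℝ} (hα1 : 1 < α) (hα2 : α ≤ 2) (n k : ℕ) :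
    fracSum α (shiftedPow α n) k = Real.Gamma α * (k - n : ℕ) := by
  rcases le_or_gt n k with hnk | hkn
  · obtain ⟨m, rfl⟩ := Nat.exists_eq_add_of_le hnk
    rw [fracSum_add_of_eq_zero fun j hj => shiftedPow_eq_zero_of_le α hj.le]
    simp only [shiftedPow_add, fracSum_shiftedPow_zero hα1 hα2, Nat.add_sub_cancel_left]
  · rw [fracSum_eq_zero fun j hj => shiftedPow_eq_zero_of_le α (by omega),
      Nat.sub_eq_zero_of_le hkn.le]
    simp

theorem natCast_sub_second_difference (n t : ℕ) :
    ((t + 2 - n : ℕ) : ℝ) - 2 * (t + 1 - n : ℕ) + (t - n : ℕ) = if t + 1 = n then 1 else 0 := by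
  split_ifs with h
  · subst h
    simp
  rcases lt_or_gt_of_ne h with h | h
  · rw [Nat.sub_eq_zero_of_le (by omega), Nat.sub_eq_zero_of_le (by omega),
      Nat.sub_eq_zero_of_le (by omega)]
    simp
  · obtain ⟨m, rfl⟩ : ∃ m, t = n + m := ⟨t - n, by omega⟩
    rw [show n + m + 2 - n = m + 2 by omega, show n + m + 1 - n = m + 1 by omega,
      Nat.add_sub_cancel_left]
    push_cast
    ring

theorem fracDiff_shiftedPow {α : ℝ} (hα1 : 1 < α) (hα2 : α ≤ 2) (n t : ℕ) :
    fracDiff α (shiftedPow α n) t = if t + 1 = n then Real.Gamma α else 0 := by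
  have h := natCast_sub_second_difference n t
  rw [fracDiff, fracSum_shiftedPow hα1 hα2, fracSum_shiftedPow hα1 hα2,
    fracSum_shiftedPow hα1 hα2]
  split_ifs at h ⊢ <;> linear_combination Real.Gamma α * h

theorem G_eq_shiftedPow (α : ℝ) (b k s : ℕ) :
    G α b (α - 2 + k) s = (fp (α + b - s) (α - 1) / fp (α + b + 1) (α - 1) * shiftedPow α 0 k
      - shiftedPow α (s + 1) k) / Real.Gamma α := by
  rw [G]
  split_ifs with h
  · simp only [shiftedPow]
    push_cast
    ring_nf
  · have hks : k ≤ s + 1 := by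
      have : (k : ℝ) < s + 1 := by linarith [not_le.mp h]
      exact_mod_cast this.le
    rw [shiftedPow_eq_zero_of_le α hks]
    simp only [shiftedPow, Nat.cast_zero, sub_zero]
    ring

/-- Here `y k` stands for `y(α-2+k)` and `q s` stands for `q(α-1+s)`. -/
theorem statement1_general (α : ℝ) (b : ℕ) (hα1 : 1 < α) (hα2 : α ≤ 2)
    (q : ℕ → ℝ) (f : ℝ → ℝ) (y : ℕ → ℝ)
    (hrep : ∀ k : ℕ, k ≤ b + 3 →
      y k = ∑ s ∈ Finset.range (b + 2), G α b (α - 2 + k) s * q s * f (y (s + 1))) :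
    (∀ t : ℕ, t ≤ b + 1 → fracDiff α y t + q t * f (y (t + 1)) = 0) ∧
      y 0 = 0 ∧ y (b + 3) = 0 := by
  have hΓ : Real.Gamma α ≠ 0 := (Real.Gamma_pos_of_pos (by linarith)).ne'
  set g : ℕ → ℝ := fun s => q s * f (y (s + 1))
  have hy (k : ℕ) (hk : k ≤ b + 3) : y k = ∑ s ∈ range (b + 2), g s / Real.Gamma α *
      (fp (α + b - s) (α - 1) / fp (α + b + 1) (α - 1) * shiftedPow α 0 k
        - shiftedPow α (s + 1) k) := by
    rw [hrep k hk]
    refine sum_congr rfl fun s _ => ?_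
    rw [G_eq_shiftedPow]
    ring
  refine ⟨fun t ht => ?_, ?_, ?_⟩
  · rw [fracDiff_congr fun j hj => hy j (by omega), fracDiff_sum]
    simp [fracDiff_const_mul, fracDiff_sub, fracDiff_shiftedPow hα1 hα2, mul_ite,
      div_mul_cancel₀ _ hΓ, Nat.lt_succ_of_le ht, g]
  · rw [hy 0 (by omega)]
    simp [shiftedPow_eq_zero_of_le]
  · rw [hy (b + 3) le_rfl]
    refine sum_eq_zero fun s _ => ?_
    have hb : (0 : ℝ) ≤ b := b.cast_nonneg
    have hD : fp (α + b + 1) (α - 1) ≠ 0 := (fp_pos (by linarith) (by linarith)).ne'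
    have hcol : shiftedPow α 0 (b + 3) = fp (α + b + 1) (α - 1) ∧
        shiftedPow α (s + 1) (b + 3) = fp (α + b - s) (α - 1) := by
      simp only [shiftedPow]
      push_cast
      constructor <;> ring_nf
    rw [hcol.1, hcol.2, div_mul_cancel₀ _ hD, sub_self, mul_zero]

/-- If `y` satisfies the Green-function sum representation, then `y` solves the
discrete fractional BVP `Δ^α y(t) + q(t+α-1)·f(y(t+α-1)) = 0`, `t = 0,…,b+1`,
with `y(α-2) = y(α+b+1) = 0`.
Here `y k` stands for `y(α-2+k)` and `q s` stands for `q(α-1+s)`. -/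
theorem statement1 (α : ℝ) (b : ℕ) (hα1 : 1 < α) (hα2 : α ≤ 2) (hb : 2 ≤ b)
    (q : ℕ → ℝ) (f : ℝ → ℝ) (y : ℕ → ℝ)
    (hrep : ∀ k : ℕ, k ≤ b + 3 →
      y k = ∑ s ∈ Finset.range (b + 2), G α b (α - 2 + k) s * q s * f (y (s + 1))) :
    (∀ t : ℕ, t ≤ b + 1 → fracDiff α y t + q t * f (y (t + 1)) = 0) ∧
      y 0 = 0 ∧ y (b + 3) = 0 :=
  statement1_general α b hα1 hα2 q f y hrep
end

section
/- If b is even, then the maximum of G(s+α−1,s) over integer s ∈ {1,…,b+1} equals (1/4)·(b+2α)·(b+2)·Γ(b/2+α)²·Γ(b+3) / ( Γ(α)·Γ(b+α+2)·Γ(b/2+2)² ). -/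
open Real

noncomputable def gammaRatio (α x : ℝ) : ℝ := Gamma (x + α) / Gamma (x + 1)

noncomputable def diagKernel (α : ℝ) (b s : ℕ) : ℝ :=
  gammaRatio α s * gammaRatio α ((b : ℝ) + 1 - s)

noncomputable def diagScale (α : ℝ) (b : ℕ) : ℝ :=
  Gamma ((b : ℝ) + 3) / (Gamma α * Gamma ((b : ℝ) + α + 2))

lemma gammaRatio_pos {α x : ℝ} (hx : -1 < x) (hxα : 0 < x + α) : 0 < gammaRatio α x := by
  unfold gammaRatio
  have : 0 < x + 1 := by linarith
  positivity

lemma gammaRatio_add_one {α x : ℝ} (hxα : x + α ≠ 0) (hx : x + 1 ≠ 0) :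
    gammaRatio α (x + 1) = (x + α) / (x + 1) * gammaRatio α x := by
  unfold gammaRatio
  rw [add_right_comm, Gamma_add_one hxα, Gamma_add_one hx]
  field_simp

lemma diagScale_pos {α : ℝ} (hα : 0 < α) (b : ℕ) : 0 < diagScale α b := by
  unfold diagScale
  positivity

lemma G_diag (α : ℝ) (b s : ℕ) :
    G α b ((s : ℝ) + α - 1) s = diagScale α b * diagKernel α b s := by
  have hvanish : fp ((s : ℝ) + α - 1 - s - 1) (α - 1) = 0 := by
    rw [fp, show (s : ℝ) + α - 1 - s - 1 - (α - 1) + 1 = 0 by ring, Gamma_zero, div_zero]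
  rw [G, if_pos (by linarith), hvanish, sub_zero, diagScale, diagKernel]
  simp only [fp, gammaRatio, div_div_eq_mul_div]
  ring_nf

lemma diagKernel_pos {α : ℝ} (hα : 0 < α) {b s : ℕ} (hs : s ≤ b + 1) :
    0 < diagKernel α b s := by
  have hsb : (s : ℝ) ≤ b + 1 := by exact_mod_cast hs
  exact mul_pos (gammaRatio_pos (by linarith [s.cast_nonneg (α := ℝ)]) (by positivity))
    (gammaRatio_pos (by linarith) (by linarith))

lemma diagKernel_succ_mul {α : ℝ} (hα : 0 < α) {b s : ℕ} (hs : s ≤ b) :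
    diagKernel α b (s + 1) * ((s + 1) * (b - s + α)) =
      diagKernel α b s * ((s + α) * (b - s + 1)) := by
  have hsb : (s : ℝ) ≤ b := by exact_mod_cast hs
  have hleft := gammaRatio_add_one (α := α) (x := s) (by positivity) (by positivity)
  have hright := gammaRatio_add_one (α := α) (x := (b : ℝ) - s)
    (by linarith) (by linarith)
  have hbs : (b : ℝ) - s + 1 ≠ 0 := by linarith
  simp only [diagKernel, Nat.cast_succ, show (b : ℝ) + 1 - (s + 1) = b - s by ring,
    show (b : ℝ) + 1 - s = b - s + 1 by ring, hleft, hright]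
  field_simp

lemma diagKernel_succ_mul_sub {α : ℝ} (hα : 0 < α) {b s : ℕ} (hs : s ≤ b) :
    diagKernel α b (s + 1) * ((s + 1) * (b - s + α)) -
        diagKernel α b s * ((s + 1) * (b - s + α)) =
      diagKernel α b s * ((α - 1) * (b - 2 * s)) := by
  rw [diagKernel_succ_mul hα hs]
  ring

lemma diagKernel_le_succ {α : ℝ} (hα : 1 ≤ α) {b s : ℕ} (hs : 2 * s ≤ b) :
    diagKernel α b s ≤ diagKernel α b (s + 1) := by
  have hsb : 2 * (s : ℝ) ≤ b := by exact_mod_cast hs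
  have hK := (diagKernel_pos (α := α) (by linarith) (b := b) (s := s) (by omega)).le
  have hdiff := diagKernel_succ_mul_sub (α := α) (by linarith) (b := b) (s := s) (by omega)
  have hP : (0 : ℝ) < (s + 1) * (b - s + α) := mul_pos (by positivity) (by linarith)
  refine le_of_mul_le_mul_right ?_ hP
  linarith [mul_nonneg hK (mul_nonneg (sub_nonneg.2 hα) (sub_nonneg.2 hsb))]

lemma diagKernel_succ_le {α : ℝ} (hα : 1 ≤ α) {b s : ℕ} (hbs : b ≤ 2 * s) (hsb : s ≤ b) :
    diagKernel α b (s + 1) ≤ diagKernel α b s := by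
  have hbs' : (b : ℝ) ≤ 2 * s := by exact_mod_cast hbs
  have hsb' : (s : ℝ) ≤ b := by exact_mod_cast hsb
  have hK := (diagKernel_pos (α := α) (by linarith) (b := b) (s := s) (by omega)).le
  have hdiff := diagKernel_succ_mul_sub (α := α) (by linarith) hsb
  have hP : (0 : ℝ) < (s + 1) * (b - s + α) := mul_pos (by positivity) (by linarith)
  refine le_of_mul_le_mul_right ?_ hP
  linarith [mul_nonneg hK (mul_nonneg (sub_nonneg.2 hα) (sub_nonneg.2 hbs'))]

lemma diagKernel_le_middle {α : ℝ} (hα : 1 ≤ α) {m s : ℕ} (hs : s ≤ m + m + 1) :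
    diagKernel α (m + m) s ≤ diagKernel α (m + m) m := by
  rcases le_total s m with hsm | hms
  · refine monotoneOn_of_le_succ Set.ordConnected_Iic (fun n _ _ hn ↦ ?_) hsm le_rfl hsm
    rw [Order.succ_eq_add_one, Set.mem_Iic] at hn
    exact diagKernel_le_succ hα (by omega)
  · refine antitoneOn_of_succ_le (Set.ordConnected_Icc (a := m) (b := m + m + 1))
      (fun n _ hn hsn ↦ ?_) ⟨le_rfl, by omega⟩ ⟨hms, hs⟩ hms
    rw [Order.succ_eq_add_one] at hsn ⊢
    exact diagKernel_succ_le hα (by have := hn.1; omega) (by have := hsn.2; omega)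

lemma maxValue_eq_diagScale_mul {α : ℝ} (hα : 0 < α) (m : ℕ) :
    1 / 4 * ((((m + m : ℕ) : ℝ) + 2 * α) * (((m + m : ℕ) : ℝ) + 2) *
        Gamma (((m + m : ℕ) : ℝ) / 2 + α) ^ 2 * Gamma (((m + m : ℕ) : ℝ) + 3)) /
      (Gamma α * Gamma (((m + m : ℕ) : ℝ) + α + 2) * Gamma (((m + m : ℕ) : ℝ) / 2 + 2) ^ 2) =
    diagScale α (m + m) * diagKernel α (m + m) m := by
  have hm : (m : ℝ) + 1 ≠ 0 := by positivity
  rw [diagKernel, diagScale, Nat.cast_add, show ((m : ℝ) + m) / 2 = m by ring,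
    show (m : ℝ) + m + 1 - m = m + 1 by ring, gammaRatio_add_one (by positivity) hm,
    show (m : ℝ) + 2 = m + 1 + 1 by ring, Gamma_add_one hm]
  simp only [gammaRatio]
  field_simp
  ring

theorem statement4_general (α : ℝ) (b : ℕ) (hα1 : 1 < α) (hb : 2 ≤ b)
    (hbe : Even b) :
    IsGreatest {x : ℝ | ∃ s : ℕ, 1 ≤ s ∧ s ≤ b + 1 ∧ x = G α b ((s : ℝ) + α - 1) s}
      (1 / 4 * (((b : ℝ) + 2 * α) * ((b : ℝ) + 2) * Real.Gamma ((b : ℝ) / 2 + α) ^ 2 *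
          Real.Gamma ((b : ℝ) + 3)) /
        (Real.Gamma α * Real.Gamma ((b : ℝ) + α + 2) * Real.Gamma ((b : ℝ) / 2 + 2) ^ 2)) := by
  obtain ⟨m, rfl⟩ := hbe
  rw [maxValue_eq_diagScale_mul (by linarith)]
  refine ⟨⟨m, by omega, by omega, (G_diag α _ m).symm⟩, ?_⟩
  rintro _ ⟨s, -, hs, rfl⟩
  rw [G_diag]
  exact mul_le_mul_of_nonneg_left (diagKernel_le_middle hα1.le hs)
    (diagScale_pos (by linarith) _).le

/-- If `b` is even, the maximum of `G(s+α-1,s)` over integer `s ∈ {1,…,b+1}` equals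
`(1/4)·(b+2α)(b+2)·Γ(b/2+α)²·Γ(b+3) / (Γ(α)·Γ(b+α+2)·Γ(b/2+2)²)`. -/
theorem statement4 (α : ℝ) (b : ℕ) (hα1 : 1 < α) (hα2 : α ≤ 2) (hb : 2 ≤ b)
    (hbe : Even b) :
    IsGreatest {x : ℝ | ∃ s : ℕ, 1 ≤ s ∧ s ≤ b + 1 ∧ x = G α b ((s : ℝ) + α - 1) s}
      (1 / 4 * (((b : ℝ) + 2 * α) * ((b : ℝ) + 2) * Real.Gamma ((b : ℝ) / 2 + α) ^ 2 *
          Real.Gamma ((b : ℝ) + 3)) /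
        (Real.Gamma α * Real.Gamma ((b : ℝ) + α + 2) * Real.Gamma ((b : ℝ) / 2 + 2) ^ 2)) :=
  statement4_general α b hα1 hb hbe
end
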